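/- Let ψ : (a,∞) → ℝ be infinitely differentiable for some a < 0, let c ≥ 0 and θ > 0, and define φ(t) = ψ((c^θ + t)^{1/θ} − c) for t > 0 (the tilted outer power transform of ψ). Then for every integer n ≥ 1 and every t > 0, φ^{(n)}(t) = ∑_{k=1}^{n} ψ^{(k)}((c^θ + t)^{1/θ} − c) · (c^θ + t)^{k/θ − n} · s_{nk}(1/θ). -/

import Mathlib

noncomputable section

/-- Stirling numbers of the first kind `s(n,k)` (signed), real-valued,
defined by the recurrence `s(n+1,k) = s(n,k-1) - n·s(n,k)`. -/
def st1 : ℕ → ℕ → ℝ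
  | 0, 0 => 1
  | 0, _ + 1 => 0
  | _ + 1, 0 => 0
  | n + 1, k + 1 => st1 n k - (n : ℝ) * st1 n (k + 1)

/-- Stirling numbers of the second kind `S(n,k)`, real-valued,
defined by the recurrence `S(n+1,k) = S(n,k-1) + k·S(n,k)`. -/
def st2 : ℕ → ℕ → ℝ
  | 0, 0 => 1
  | 0, _ + 1 => 0
  | _ + 1, 0 => 0
  | n + 1, k + 1 => st2 n k + ((k : ℝ) + 1) * st2 n (k + 1)

/-- `snk n k x = ∑_{l=k}^n s(n,l) S(l,k) x^l`. -/
def snk (n k : ℕ) (x : ℝ) : ℝ := ∑ l ∈ Finset.Icc k n, st1 n l * st2 l k * x ^ l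

/-- Falling factorial `(x)_n = x (x-1) ⋯ (x-n+1)`, with `(x)_0 = 1`. -/
def ff (x : ℝ) (n : ℕ) : ℝ := ∏ i ∈ Finset.range n, (x - (i : ℝ))

/-- The index set `P_{n,k}`: tuples `(j_1, …, j_{n-k+1})`, 0-indexed by `Fin (n-k+1)`
(entry `i` representing `j_{i+1}`), with `∑ i·j_i = n` and `∑ j_i = k`. -/
def PIdx (n k : ℕ) : Finset (Fin (n - k + 1) → ℕ) :=
  (Fintype.piFinset fun _ => Finset.range (n + 1)).filter fun j =>
    (∑ i, (i.1 + 1) * j i) = n ∧ (∑ i, j i) = k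

/-- The partial Bell polynomial `B_{n,k}(x_1,…,x_{n-k+1})`, the `l`-th argument being `x l`. -/
def bellP (n k : ℕ) (x : ℕ → ℝ) : ℝ :=
  ∑ j ∈ PIdx n k,
    ((n.factorial : ℝ) / ∏ i, ((j i).factorial : ℝ)) *
      ∏ i, (x (i.1 + 1) / ((i.1 + 1).factorial : ℝ)) ^ j i

/-- The index set `Q^{d₀}_{d,k} = { j : ∑ j_s = k, 1 ≤ j_s ≤ d_s }`. -/
def QIdx (d0 : ℕ) (dv : Fin d0 → ℕ) (k : ℕ) : Finset (Fin d0 → ℕ) :=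
  (Fintype.piFinset fun s => Finset.Icc 1 (dv s)).filter fun j => (∑ s, j s) = k

/-- Complete monotonicity of `h` on `(0,∞)`: `h` is infinitely differentiable there and
`(-1)^k h^{(k)}(t) ≥ 0` for all `k ∈ ℕ₀` and `t ∈ (0,∞)`. -/
def CMOn (h : ℝ → ℝ) : Prop :=
  ContDiffOn ℝ (⊤ : ℕ∞) h (Set.Ioi 0) ∧
    ∀ k : ℕ, ∀ t ∈ Set.Ioi (0 : ℝ), 0 ≤ (-1 : ℝ) ^ k * iteratedDerivWithin k h (Set.Ioi 0) t

/-- Partial derivative of `F : ℝ^ι → ℝ` in the coordinate `i`. -/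
def pdrv {ι : Type*} [DecidableEq ι] (i : ι) (F : (ι → ℝ) → ℝ) : (ι → ℝ) → ℝ :=
  fun x => deriv (fun y => F (Function.update x i y)) (x i)

lemma st1_eq_zero : ∀ {n l : ℕ}, n < l → st1 n l = 0 := by
  intro n
  induction n with
  | zero => intro l hl; match l, hl with | l+1, _ => rfl
  | succ m ih =>
    intro l hl
    match l, hl with
    | l+1, hl =>
      show st1 m l - (m:ℝ) * st1 m (l+1) = 0
      rw [ih (by omega), ih (by omega)]; ring

lemma st2_eq_zero : ∀ {l k : ℕ}, l < k → st2 l k = 0 := by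
  intro l
  induction l with
  | zero => intro k hk; match k, hk with | k+1, _ => rfl
  | succ m ih =>
    intro k hk
    match k, hk with
    | k+1, hk =>
      show st2 m k + ((k:ℝ)+1) * st2 m (k+1) = 0
      rw [ih (by omega), ih (by omega)]; ring

lemma snk_eq_range (n k : ℕ) (x : ℝ) :
    snk n k x = ∑ l ∈ Finset.range (n+1), st1 n l * st2 l k * x ^ l := by
  rw [snk]
  apply Finset.sum_subset
  · intro l hl; simp only [Finset.mem_Icc] at hl; simp only [Finset.mem_range]; omega
  · intro l hl hl'
    simp only [Finset.mem_range] at hl; simp only [Finset.mem_Icc] at hl'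
    rw [st2_eq_zero (by omega)]; ring

lemma snk_zero_right {n : ℕ} (hn : 1 ≤ n) (x : ℝ) : snk n 0 x = 0 := by
  rw [snk_eq_range]
  apply Finset.sum_eq_zero
  intro l hl
  match l with
  | 0 =>
    match n, hn with
    | m+1, _ => simp [st1]
  | l+1 => show st1 n (l+1) * st2 (l+1) 0 * _ = 0; show st1 n (l+1) * 0 * _ = 0; ring

lemma snk_eq_zero {n k : ℕ} (h : n < k) (x : ℝ) : snk n k x = 0 := by
  rw [snk, Finset.Icc_eq_empty (by omega), Finset.sum_empty]

lemma snk_rec (n k : ℕ) (x : ℝ) :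
    snk (n+1) (k+1) x = x * snk n k x + (((k:ℝ)+1) * x - n) * snk n (k+1) x := by
  rw [snk_eq_range]
  rw [Finset.sum_range_succ' ]
  have h0 : st1 (n+1) 0 * st2 0 (k+1) * x ^ 0 = 0 := by
    show st1 (n+1) 0 * 0 * _ = 0; ring
  rw [h0, add_zero]
  have hterm : ∀ m, st1 (n+1) (m+1) * st2 (m+1) (k+1) * x ^ (m+1) =
      x * (st1 n m * st2 m k * x ^ m) + ((k:ℝ)+1) * x * (st1 n m * st2 m (k+1) * x ^ m)
      - (n:ℝ) * (st1 n (m+1) * st2 (m+1) (k+1) * x ^ (m+1)) := by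
    intro m
    have e1 : st1 (n+1) (m+1) = st1 n m - (n:ℝ) * st1 n (m+1) := rfl
    have e2 : st2 (m+1) (k+1) = st2 m k + ((k:ℝ)+1) * st2 m (k+1) := rfl
    rw [e1, e2]; ring
  rw [Finset.sum_congr rfl (fun m _ => hterm m)]
  rw [Finset.sum_sub_distrib, Finset.sum_add_distrib, ← Finset.mul_sum, ← Finset.mul_sum,
    ← Finset.mul_sum, ← snk_eq_range, ← snk_eq_range]
  have : ∑ m ∈ Finset.range (n+1), st1 n (m+1) * st2 (m+1) (k+1) * x ^ (m+1) = snk n (k+1) x := by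
    rw [Finset.sum_range_succ, st1_eq_zero (by omega), snk_eq_range,
      Finset.sum_range_succ' (fun l => st1 n l * st2 l (k+1) * x ^ l) n]
    have h0' : st1 n 0 * st2 0 (k+1) * x ^ 0 = 0 := by
      show st1 n 0 * 0 * _ = 0; ring
    rw [h0']; ring
  rw [this]; ring

lemma sumIcc (f : ℕ → ℝ) : ∀ m : ℕ, ∑ k ∈ Finset.Icc 1 m, f k = ∑ k ∈ Finset.range m, f (k+1) := by
  intro m
  induction m with
  | zero => simp
  | succ m ih =>
    rw [Finset.sum_Icc_succ_top (by omega), ih, Finset.sum_range_succ]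

lemma key_sum {n : ℕ} (hn : 1 ≤ n) (x : ℝ) (T : ℕ → ℝ) :
    ∑ k ∈ Finset.Icc 1 (n+1), T k * snk (n+1) k x =
    ∑ k ∈ Finset.Icc 1 n, (x * snk n k x * T (k+1) + ((k:ℝ) * x - n) * snk n k x * T k) := by
  rw [sumIcc, sumIcc]
  have : ∀ j ∈ Finset.range (n+1), T (j+1) * snk (n+1) (j+1) x =
      x * snk n j x * T (j+1) + (((j:ℝ)+1) * x - n) * snk n (j+1) x * T (j+1) := by
    intro j _; rw [snk_rec]; ring
  rw [Finset.sum_congr rfl this, Finset.sum_add_distrib]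
  rw [Finset.sum_range_succ' (fun j => x * snk n j x * T (j+1)) n]
  rw [snk_zero_right hn, Finset.sum_range_succ (fun j => (((j:ℝ)+1)*x - n) * snk n (j+1) x * T (j+1)) n]
  rw [snk_eq_zero (by omega)]
  simp only [mul_zero, zero_mul, add_zero]
  rw [← Finset.sum_add_distrib]
  apply Finset.sum_congr rfl
  intro j _
  push_cast
  ring

lemma rpowD (b p t : ℝ) (h : 0 < b + t) :
    HasDerivAt (fun u : ℝ => (b + u) ^ p) (p * (b + t) ^ (p - 1)) t := by
  have h1 : HasDerivAt (fun u : ℝ => b + u) 1 t := (hasDerivAt_id t).const_add b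
  have h2 := h1.rpow_const (p := p) (Or.inl (ne_of_gt h))
  simpa using h2

lemma chainA (a : ℝ) (ψ : ℝ → ℝ) (hψ : ContDiffOn ℝ (⊤ : ℕ∞) ψ (Set.Ioi a)) (k : ℕ)
    (g : ℝ → ℝ) (gd t : ℝ) (hg : HasDerivAt g gd t) (hmem : g t ∈ Set.Ioi a) :
    HasDerivAt (fun u => iteratedDerivWithin k ψ (Set.Ioi a) (g u))
      (iteratedDerivWithin (k+1) ψ (Set.Ioi a) (g t) * gd) t := by
  have hdiff : DifferentiableOn ℝ (iteratedDerivWithin k ψ (Set.Ioi a)) (Set.Ioi a) :=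
    hψ.differentiableOn_iteratedDerivWithin (by exact_mod_cast ENat.natCast_lt_top k) (uniqueDiffOn_Ioi a)
  have hda : DifferentiableAt ℝ (iteratedDerivWithin k ψ (Set.Ioi a)) (g t) :=
    hdiff.differentiableAt (isOpen_Ioi.mem_nhds hmem)
  have h1 : HasDerivAt (iteratedDerivWithin k ψ (Set.Ioi a))
      (iteratedDerivWithin (k+1) ψ (Set.Ioi a) (g t)) (g t) := by
    rw [iteratedDerivWithin_succ,
      derivWithin_of_isOpen isOpen_Ioi hmem]
    exact hda.hasDerivAt
  exact h1.comp t hg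

/-- derivatives of the tilted outer power transform
`φ(t) = ψ((c^θ + t)^{1/θ} - c)`:
`φ^{(n)}(t) = ∑_{k=1}^n ψ^{(k)}((c^θ+t)^{1/θ}-c) (c^θ+t)^{k/θ-n} s_{nk}(1/θ)`. -/
theorem stmt15 (a : ℝ) (ha : a < 0) (ψ : ℝ → ℝ) (hψ : ContDiffOn ℝ (⊤ : ℕ∞) ψ (Set.Ioi a))
    (c θ : ℝ) (hc : 0 ≤ c) (hθ : 0 < θ) (n : ℕ) (hn : 1 ≤ n) (t : ℝ) (ht : 0 < t) :
    iteratedDerivWithin n (fun u => ψ ((c ^ θ + u) ^ (1 / θ) - c)) (Set.Ioi 0) t =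
      ∑ k ∈ Finset.Icc 1 n,
        iteratedDerivWithin k ψ (Set.Ioi a) ((c ^ θ + t) ^ (1 / θ) - c) *
          (c ^ θ + t) ^ ((k : ℝ) / θ - (n : ℝ)) * snk n k (1 / θ) := by
  have hbnn : 0 ≤ c ^ θ := Real.rpow_nonneg hc θ
  have hbt : ∀ u : ℝ, 0 < u → 0 < c ^ θ + u := fun u hu => by linarith
  have hmem : ∀ u : ℝ, 0 < u → (c ^ θ + u) ^ (1 / θ) - c ∈ Set.Ioi a := by
    intro u hu
    have h1 : (c ^ θ) ^ (1 / θ) < (c ^ θ + u) ^ (1 / θ) :=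
      Real.rpow_lt_rpow hbnn (by linarith) (by positivity)
    have h2 : (c ^ θ) ^ (1 / θ) = c := by
      rw [← Real.rpow_mul hc, mul_one_div, div_self (ne_of_gt hθ), Real.rpow_one]
    simp only [Set.mem_Ioi]
    rw [h2] at h1
    linarith
  have hgd : ∀ u : ℝ, 0 < u → HasDerivAt (fun v : ℝ => (c ^ θ + v) ^ (1 / θ) - c)
      ((1 / θ) * (c ^ θ + u) ^ (1 / θ - 1)) u := by
    intro u hu
    exact (rpowD (c ^ θ) (1 / θ) u (hbt u hu)).sub_const c
  induction n, hn using Nat.le_induction generalizing t with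
  | base =>
    rw [iteratedDerivWithin_one,
      derivWithin_of_isOpen isOpen_Ioi ht]
    have hD := chainA a ψ hψ 0 (fun v : ℝ => (c ^ θ + v) ^ (1 / θ) - c)
      ((1 / θ) * (c ^ θ + t) ^ (1 / θ - 1)) t (hgd t ht) (hmem t ht)
    simp only [iteratedDerivWithin_zero] at hD
    rw [hD.deriv]
    have hsnk : snk 1 1 (1 / θ) = 1 / θ := by
      simp [snk, st1, st2]
    rw [Finset.Icc_self, Finset.sum_singleton, hsnk]
    norm_num
    ring
  | succ n hn ih =>
    rw [iteratedDerivWithin_succ,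
      derivWithin_of_isOpen isOpen_Ioi ht]
    set z := (c ^ θ + t) ^ (1 / θ) - c with hz
    have heq : deriv (iteratedDerivWithin n (fun u => ψ ((c ^ θ + u) ^ (1 / θ) - c)) (Set.Ioi 0)) t
        = deriv (fun u => ∑ k ∈ Finset.Icc 1 n,
            iteratedDerivWithin k ψ (Set.Ioi a) ((c ^ θ + u) ^ (1 / θ) - c) *
              (c ^ θ + u) ^ ((k : ℝ) / θ - (n : ℝ)) * snk n k (1 / θ)) t := by
      apply Filter.EventuallyEq.deriv_eq
      exact Filter.eventuallyEq_of_mem (isOpen_Ioi.mem_nhds ht) (fun u hu => ih u hu)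
    have hterm : ∀ k ∈ Finset.Icc 1 n, HasDerivAt
        (fun u => iteratedDerivWithin k ψ (Set.Ioi a) ((c ^ θ + u) ^ (1 / θ) - c) *
          (c ^ θ + u) ^ ((k : ℝ) / θ - (n : ℝ)) * snk n k (1 / θ))
        ((iteratedDerivWithin (k+1) ψ (Set.Ioi a) z * ((1 / θ) * (c ^ θ + t) ^ (1 / θ - 1)) *
            (c ^ θ + t) ^ ((k : ℝ) / θ - (n : ℝ)) +
          iteratedDerivWithin k ψ (Set.Ioi a) z *
            (((k : ℝ) / θ - (n : ℝ)) * (c ^ θ + t) ^ ((k : ℝ) / θ - (n : ℝ) - 1))) *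
          snk n k (1 / θ)) t := by
      intro k hk
      exact ((chainA a ψ hψ k _ _ t (hgd t ht) (hmem t ht)).mul
        (rpowD (c ^ θ) ((k : ℝ) / θ - (n : ℝ)) t (hbt t ht))).mul_const _
    rw [heq, (HasDerivAt.fun_sum hterm).deriv]
    set T : ℕ → ℝ := fun k => iteratedDerivWithin k ψ (Set.Ioi a) z *
      (c ^ θ + t) ^ ((k : ℝ) / θ - ((n : ℝ) + 1)) with hT
    have E1 : ∑ k ∈ Finset.Icc 1 n,
        ((iteratedDerivWithin (k+1) ψ (Set.Ioi a) z * ((1 / θ) * (c ^ θ + t) ^ (1 / θ - 1)) *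
            (c ^ θ + t) ^ ((k : ℝ) / θ - (n : ℝ)) +
          iteratedDerivWithin k ψ (Set.Ioi a) z *
            (((k : ℝ) / θ - (n : ℝ)) * (c ^ θ + t) ^ ((k : ℝ) / θ - (n : ℝ) - 1))) *
          snk n k (1 / θ))
        = ∑ k ∈ Finset.Icc 1 n, ((1 / θ) * snk n k (1 / θ) * T (k+1) +
            ((k : ℝ) * (1 / θ) - (n : ℝ)) * snk n k (1 / θ) * T k) := by
      apply Finset.sum_congr rfl
      intro k hk
      have e1 : (c ^ θ + t) ^ (((k : ℝ) + 1) / θ - ((n : ℝ) + 1)) =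
          (c ^ θ + t) ^ (1 / θ - 1) * (c ^ θ + t) ^ ((k : ℝ) / θ - (n : ℝ)) := by
        rw [← Real.rpow_add (hbt t ht)]; congr 1; ring
      have e2 : (c ^ θ + t) ^ ((k : ℝ) / θ - ((n : ℝ) + 1)) =
          (c ^ θ + t) ^ ((k : ℝ) / θ - (n : ℝ) - 1) := by congr 1; ring
      rw [hT]
      push_cast
      rw [e1, e2]
      ring
    rw [E1, ← key_sum hn (1 / θ) T]
    apply Finset.sum_congr rfl
    intro k hk
    rw [hT]
    push_cast
    ring
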